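/- arXiv:2401.07051 — 2 statements merged into one kernel-verified Lean document; each statement's English description precedes it below -/
import Mathlib

section
/- Let X₀, …, X_T be real random variables on a common probability space such that each X_t has the Gaussian law with mean μ_t and variance σ_t² (σ_t > 0). For each t let δ_t ∈ (0,1), g_t ∈ ℝ, and let q_t be the δ_t-quantile of the standard Gaussian. Suppose the per-step deterministic constraints μ_t ≤ g_t + σ_t·q_t hold for all t, that Σ_{t=0}^T δ_t ≤ δ, and that Σ_{t=0}^T g_t ≤ (T+1)·g. Then the cumulative chance constraint P( (1/(T+1)) Σ_{t=0}^T X_t ≤ g ) ≥ 1 − δ holds. -/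
/-!
If the average of the `X t` exceeds `g`, then, since `∑ gt ≤ (T + 1) g`, some `X t` exceeds its
budget `gt t`. By the per-step constraint, `X t > gt t` forces the standardized value below
`q t`, an event of probability `δt t`; the union bound then caps the failure probability by
`∑ δt ≤ δ`.
-/

open MeasureTheory ProbabilityTheory Set
open scoped ENNReal NNReal

namespace ProbabilityTheory

variable {Ω : Type*} [MeasurableSpace Ω] {P : Measure Ω}

lemma hasLaw_of_map_eq {𝓧 : Type*} [MeasurableSpace 𝓧] {X : Ω → 𝓧} {μ : Measure 𝓧}
    [NeZero μ] (hX : P.map X = μ) : HasLaw X μ P :=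
  ⟨aemeasurable_of_map_neZero (hX ▸ inferInstance), hX⟩

-- Standardizing as `(m - X) / s` rather than `(X - m) / s` turns upper tails of `X` into lower
-- tails of a standard Gaussian, so no symmetry of the Gaussian law is needed.
lemma gaussianReal_const_sub_div {X : Ω → ℝ} {m s : ℝ} (hs : s ≠ 0)
    (hX : HasLaw X (gaussianReal m ⟨s ^ 2, sq_nonneg _⟩) P) :
    HasLaw (fun ω ↦ (m - X ω) / s) (gaussianReal 0 1) P := by
  convert gaussianReal_div_const (gaussianReal_const_sub hX m) s using 2
  · simp
  · ext
    change (1 : ℝ) = ((NNReal.mk (s ^ 2) _ / NNReal.mk (s ^ 2) _ : ℝ≥0) : ℝ)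
    rw [NNReal.coe_div, NNReal.coe_mk, div_self (pow_ne_zero 2 hs)]

lemma measure_lt_le_gaussianReal_Iic {X : Ω → ℝ} {m s b q : ℝ} (hs : 0 < s)
    (hX : HasLaw X (gaussianReal m ⟨s ^ 2, sq_nonneg _⟩) P) (hmb : m ≤ b + s * q) :
    P {ω | b < X ω} ≤ gaussianReal 0 1 (Iic q) := by
  have hZ := gaussianReal_const_sub_div hs.ne' hX
  calc P {ω | b < X ω} ≤ P {ω | (m - X ω) / s ≤ q} := by
        refine measure_mono fun ω (hω : b < X ω) ↦ ?_
        rw [mem_ofPred_eq, div_le_iff₀ hs]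
        linarith
    _ = gaussianReal 0 1 (Iic q) := hZ.measure_eq measurableSet_Iic

end ProbabilityTheory

namespace MeasureTheory

lemma measure_sum_lt_le_sum_measure_lt {Ω ι : Type*} [MeasurableSpace Ω] [Fintype ι]
    (P : Measure Ω) (X : ι → Ω → ℝ) (b : ι → ℝ) :
    P {ω | ∑ i, b i < ∑ i, X i ω} ≤ ∑ i, P {ω | b i < X i ω} := by
  calc P {ω | ∑ i, b i < ∑ i, X i ω} ≤ P (⋃ i, {ω | b i < X i ω}) := by
        refine measure_mono fun ω (hω : ∑ i, b i < ∑ i, X i ω) ↦ ?_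
        obtain ⟨i, -, hi⟩ := Finset.exists_lt_of_sum_lt hω
        exact mem_iUnion.2 ⟨i, hi⟩
    _ ≤ ∑ i, P {ω | b i < X i ω} := measure_iUnion_fintype_le _ _

lemma ofReal_one_sub_le_measure_of_measure_compl_le {Ω : Type*} [MeasurableSpace Ω]
    {P : Measure Ω} [IsProbabilityMeasure P] {A : Set Ω} {δ : ℝ} (hδ : 0 ≤ δ)
    (hA : P Aᶜ ≤ ENNReal.ofReal δ) :
    ENNReal.ofReal (1 - δ) ≤ P A := by
  have hcover : 1 ≤ P A + P Aᶜ := by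
    rw [← measure_univ (μ := P), ← union_compl_self A]
    exact measure_union_le _ _
  rw [ENNReal.ofReal_sub _ hδ, ENNReal.ofReal_one, tsub_le_iff_right]
  exact hcover.trans (by gcongr)

end MeasureTheory

/-- **Feasibility direction of Lemma 1**: per-step deterministic constraints on the
Gaussian means imply the cumulative (trajectory-level) chance constraint. -/
theorem per_step_deterministic_implies_cumulative_chance
    {Ω : Type*} [MeasurableSpace Ω] (Pr : Measure Ω) [IsProbabilityMeasure Pr]
    (T : ℕ) (X : Fin (T + 1) → Ω → ℝ)
    (μ σ δt gt q : Fin (T + 1) → ℝ) (δ g : ℝ)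
    (hσ : ∀ t, 0 < σ t) (hδt : ∀ t, δt t ∈ Set.Ioo (0 : ℝ) 1)
    (hX : ∀ t, Measure.map (X t) Pr = gaussianReal (μ t) ⟨(σ t) ^ 2, sq_nonneg _⟩)
    (hq : ∀ t, gaussianReal 0 1 (Set.Iic (q t)) = ENNReal.ofReal (δt t))
    (hdet : ∀ t, μ t ≤ gt t + σ t * q t)
    (hδsum : ∑ t, δt t ≤ δ)
    (hgsum : ∑ t, gt t ≤ (T + 1 : ℝ) * g) :
    ENNReal.ofReal (1 - δ) ≤ Pr {ω | (1 / (T + 1 : ℝ)) * ∑ t, X t ω ≤ g} := by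
  have hδt_nonneg t : 0 ≤ δt t := (hδt t).1.le
  -- Restating the variance with `NNReal.mk` lets instance search see the Gaussian law.
  have hlaw t : HasLaw (X t) (gaussianReal (μ t) (.mk _ (sq_nonneg (σ t)))) Pr :=
    hasLaw_of_map_eq (hX t)
  refine ofReal_one_sub_le_measure_of_measure_compl_le
    ((Finset.sum_nonneg fun t _ ↦ hδt_nonneg t).trans hδsum) ?_
  calc Pr {ω | (1 / (T + 1 : ℝ)) * ∑ t, X t ω ≤ g}ᶜ
        ≤ Pr {ω | ∑ t, gt t < ∑ t, X t ω} := by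
        refine measure_mono fun ω hω ↦ ?_
        rw [mem_compl_iff, mem_ofPred_eq, not_le, one_div_mul_eq_div,
          lt_div_iff₀ (by positivity)] at hω
        exact hgsum.trans_lt (by linarith)
    _ ≤ ∑ t, Pr {ω | gt t < X t ω} := measure_sum_lt_le_sum_measure_lt Pr X gt
    _ ≤ ∑ t, ENNReal.ofReal (δt t) := Finset.sum_le_sum fun t _ ↦
        (hq t) ▸ measure_lt_le_gaussianReal_Iic (hσ t) (hlaw t) (hdet t)
    _ = ENNReal.ofReal (∑ t, δt t) :=
        (ENNReal.ofReal_sum_of_nonneg fun t _ ↦ hδt_nonneg t).symm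
    _ ≤ ENNReal.ofReal δ := ENNReal.ofReal_le_ofReal hδsum
end

section
/- Let S be a nonempty finite state space, P a row-stochastic matrix on S with strictly positive invariant probability distribution η, P̃(s',s) := η(s)·P(s,s')/η(s') the backward matrix, c : S → ℝ, and T ∈ ℕ a horizon. For a fixed time step t with 0 ≤ t ≤ T define the backward value V̄_t(s) := Σ_{k=0}^{t} Σ_{s'} (P̃^k)(s,s')·c(s') and the forward value V_t(s) := Σ_{k=0}^{T−t} Σ_{s'} (P^k)(s,s')·c(s'). Then the state-level constrained quantity averaged over the stationary distribution equals the expected trajectory-level cumulative cost: Σ_s η(s)·( V̄_t(s) + V_t(s) − c(s) ) = (T+1)·Σ_s η(s)·c(s). In particular, if Σ_s η(s)·(V̄_t(s)+V_t(s)−c(s)) ≤ g' for some t, then the expected cumulative cost of the stationary chain over the horizon, Σ_{k=0}^{T} Σ_s η(s)·c(s), is at most g'. -/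
/-!
Under stationarity every step of the chain, forward along `P` or backward along the
time-reversed matrix, has expected cost `η ⬝ᵥ c`: the time reversal of a stochastic matrix
again leaves `η` invariant, and invariance of `η` passes to all powers. The backward value
averages to `t + 1` such steps and the forward value to `T - t + 1`; the present step is
counted twice, whence the correction `- c`.
-/

open Finset Matrix

namespace Matrix

variable {S R : Type*} [Fintype S]

theorem vecMul_pow_eq_self [DecidableEq S] [CommSemiring R] {P : Matrix S S R} {η : S → R}
    (hη : η ᵥ* P = η) (k : ℕ) : η ᵥ* P ^ k = η := by
  induction k with
  | zero => exact vecMul_one η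
  | succ k ih => rw [pow_succ, ← vecMul_vecMul, ih, hη]

theorem dotProduct_sum_pow_mulVec [DecidableEq S] [CommSemiring R] {P : Matrix S S R}
    {η : S → R} (hη : η ᵥ* P = η) (c : S → R) (n : ℕ) :
    η ⬝ᵥ ∑ k ∈ range n, P ^ k *ᵥ c = n * (η ⬝ᵥ c) := by
  simp only [dotProduct_sum, dotProduct_mulVec, vecMul_pow_eq_self hη, sum_const, card_range,
    nsmul_eq_mul]

def timeReversal [Field R] (η : S → R) (P : Matrix S S R) : Matrix S S R :=
  of fun s' s => η s * P s s' / η s'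

theorem vecMul_timeReversal_eq_self [Field R] {P : Matrix S S R} {η : S → R}
    (hη : ∀ s, η s ≠ 0) (hP : ∀ s, ∑ s', P s s' = 1) : η ᵥ* timeReversal η P = η := by
  ext s'
  have hterm : ∀ s, η s * timeReversal η P s s' = η s' * P s' s := fun s => by
    rw [timeReversal, of_apply]
    field_simp [hη s]
  simp only [vecMul, dotProduct, hterm, ← mul_sum, hP, mul_one]

end Matrix

theorem state_level_constraint_eq_trajectory_level_general
    {S : Type*} [Fintype S] [DecidableEq S]
    (P : Matrix S S ℝ) (η : S → ℝ)
    (hP1 : ∀ s, ∑ s', P s s' = 1)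
    (hη : ∀ s, 0 < η s)
    (hinv : ∀ s', ∑ s, η s * P s s' = η s')
    (Pb : Matrix S S ℝ) (hPb : ∀ s' s, Pb s' s = η s * P s s' / η s')
    (c : S → ℝ) (T t : ℕ) (ht : t ≤ T)
    (Vbar V : S → ℝ)
    (hVbar : ∀ s, Vbar s = ∑ k ∈ Finset.range (t + 1), ∑ s', (Pb ^ k) s s' * c s')
    (hV : ∀ s, V s = ∑ k ∈ Finset.range (T - t + 1), ∑ s', (P ^ k) s s' * c s') :
    (∑ s, η s * (Vbar s + V s - c s) = (T + 1 : ℝ) * ∑ s, η s * c s) ∧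
    (∀ g' : ℝ, ∑ s, η s * (Vbar s + V s - c s) ≤ g' →
      ∑ k ∈ Finset.range (T + 1), ∑ s, η s * c s ≤ g') := by
  have hPb_eq : Pb = timeReversal η P := ext hPb
  have hinvb : η ᵥ* Pb = η :=
    hPb_eq ▸ vecMul_timeReversal_eq_self (fun s => (hη s).ne') hP1
  have hVbar' : Vbar = ∑ k ∈ range (t + 1), Pb ^ k *ᵥ c := by
    ext s; simp only [hVbar, Finset.sum_apply, mulVec, dotProduct]
  have hV' : V = ∑ k ∈ range (T - t + 1), P ^ k *ᵥ c := by
    ext s; simp only [hV, Finset.sum_apply, mulVec, dotProduct]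
  have hmain : η ⬝ᵥ (Vbar + V - c) = (T + 1 : ℝ) * (η ⬝ᵥ c) := by
    rw [dotProduct_sub, dotProduct_add, hVbar', hV', dotProduct_sum_pow_mulVec hinvb,
      dotProduct_sum_pow_mulVec (funext hinv)]
    push_cast [ht]
    ring
  have htraj : ∑ k ∈ range (T + 1), ∑ s, η s * c s = (T + 1 : ℝ) * (η ⬝ᵥ c) := by
    simp [dotProduct]
  exact ⟨hmain, fun g' hg' => htraj ▸ hmain ▸ hg'⟩

/-- **State-level constraint equals the trajectory-level cumulative cost** under
stationarity: with the backward value `V̄_t(s) = Σ_{k=0}^t Σ_{s'} (P̃^k)(s,s')·c(s')`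
and the forward value `V_t(s) = Σ_{k=0}^{T-t} Σ_{s'} (P^k)(s,s')·c(s')`,
`Σ_s η(s)·(V̄_t(s) + V_t(s) - c(s)) = (T+1)·Σ_s η(s)·c(s)`; hence, a state-level
bound `≤ g'` yields the trajectory-level bound `Σ_{k=0}^T Σ_s η(s)·c(s) ≤ g'`. -/
theorem state_level_constraint_eq_trajectory_level
    {S : Type*} [Fintype S] [DecidableEq S] [Nonempty S]
    (P : Matrix S S ℝ) (η : S → ℝ)
    (hP0 : ∀ s s', 0 ≤ P s s') (hP1 : ∀ s, ∑ s', P s s' = 1)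
    (hη : ∀ s, 0 < η s) (hηsum : ∑ s, η s = 1)
    (hinv : ∀ s', ∑ s, η s * P s s' = η s')
    (Pb : Matrix S S ℝ) (hPb : ∀ s' s, Pb s' s = η s * P s s' / η s')
    (c : S → ℝ) (T t : ℕ) (ht : t ≤ T)
    (Vbar V : S → ℝ)
    (hVbar : ∀ s, Vbar s = ∑ k ∈ Finset.range (t + 1), ∑ s', (Pb ^ k) s s' * c s')
    (hV : ∀ s, V s = ∑ k ∈ Finset.range (T - t + 1), ∑ s', (P ^ k) s s' * c s') :
    (∑ s, η s * (Vbar s + V s - c s) = (T + 1 : ℝ) * ∑ s, η s * c s) ∧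
    (∀ g' : ℝ, ∑ s, η s * (Vbar s + V s - c s) ≤ g' →
      ∑ k ∈ Finset.range (T + 1), ∑ s, η s * c s ≤ g') :=
  state_level_constraint_eq_trajectory_level_general P η hP1 hη hinv Pb hPb c T t ht Vbar V hVbar hV
end
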